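/- Under the hypotheses of the previous statement, there is a universal constant C such that for all x, x': |h(x') - h(x)|^{1+ν} ≤ C (L₀ + (L₁ h(x))^{1+ν}) exp(L₁ ‖x' - x‖) ‖x' - x‖^{1+ν}. -/

import Mathlib

open Real

/-!
Write `p = 1 + ν` and `u = β + f - f xstar ≥ 0`, so that `h = u ^ (1 / p)`. The choice of `β` gives
`σ ≤ L₀ ^ (1 / p) * β ^ (ν / p) + L₁ * β`, so the gradient hypothesis yields
`‖∇f‖ ≤ 2 L₀ ^ (1 / p) u ^ (ν / p) + L₁ u`, hence `‖∇h‖ ≤ (2 L₀ ^ (1 / p) + L₁ h) / p`.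
Grönwall's inequality along the segment from `x` to `x'` turns this affine bound into
`|h x' - h x| ≤ (2 L₀ ^ (1 / p) + L₁ h x) ‖x' - x‖ exp (L₁ ‖x' - x‖ / p) / p`, and raising this to
the power `p` gives the claim with `C = 8`.
-/

theorem gronwallBound_zero_one_le_mul_exp {K ε : ℝ} (hK : 0 ≤ K) (hε : 0 ≤ ε) :
    gronwallBound 0 K ε 1 ≤ ε * exp K := by
  rcases hK.eq_or_lt with rfl | hK
  · simp [gronwallBound_K0]
  · have hexp : exp K * (1 - K) ≤ 1 := by
      have := mul_le_mul_of_nonneg_left (one_sub_le_exp_neg K) (exp_pos K).le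
      rwa [← exp_add, add_neg_cancel, exp_zero] at this
    simp only [gronwallBound_of_K_ne_0 hK.ne', zero_mul, zero_add, mul_one]
    rw [div_mul_eq_mul_div, div_le_iff₀ hK]
    nlinarith

theorem abs_sub_le_mul_exp_of_abs_deriv_le {φ φ' : ℝ → ℝ} {a b : ℝ} (hb : 0 ≤ b)
    (hφ : ∀ t, HasDerivAt φ (φ' t) t) (hbound : ∀ t, |φ' t| ≤ a + b * φ t) :
    |φ 1 - φ 0| ≤ (a + b * φ 0) * exp b := by
  have hψ : ∀ t, HasDerivAt (fun s => φ s - φ 0) (φ' t) t := fun t => (hφ t).sub_const _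
  have hψbound : ∀ t, ‖φ' t‖ ≤ b * ‖φ t - φ 0‖ + (a + b * φ 0) := fun t => by
    have := mul_le_mul_of_nonneg_left (le_abs_self (φ t - φ 0)) hb
    rw [norm_eq_abs, norm_eq_abs]
    linarith [hbound t]
  have := norm_le_gronwallBound_of_norm_deriv_right_le (a := 0) (b := 1) (δ := 0)
    (fun t _ => (hψ t).continuousAt.continuousWithinAt) (fun t _ => (hψ t).hasDerivWithinAt)
    (by simp) (fun t _ => hψbound t) 1 (by simp)
  rw [sub_zero, norm_eq_abs] at this
  exact this.trans (gronwallBound_zero_one_le_mul_exp hb ((abs_nonneg _).trans (hbound 0)))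

section

variable {E : Type*} [NormedAddCommGroup E] [NormedSpace ℝ E]

theorem abs_sub_le_of_norm_fderiv_le {g : E → ℝ} {a b : ℝ} (hb : 0 ≤ b)
    (hg : Differentiable ℝ g) (hbound : ∀ y, ‖fderiv ℝ g y‖ ≤ a + b * g y) (x x' : E) :
    |g x' - g x| ≤ (a + b * g x) * ‖x' - x‖ * exp (b * ‖x' - x‖) := by
  set r := ‖x' - x‖
  have hγ : ∀ t : ℝ, HasDerivAt (fun t : ℝ => x + t • (x' - x)) (x' - x) t := fun t => by
    simpa using ((hasDerivAt_id t).smul_const (x' - x)).const_add x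
  have hφ : ∀ t : ℝ, HasDerivAt (fun t : ℝ => g (x + t • (x' - x)))
      (fderiv ℝ g (x + t • (x' - x)) (x' - x)) t := fun t =>
    (hg _).hasFDerivAt.comp_hasDerivAt t (hγ t)
  have hφbound : ∀ t : ℝ, |fderiv ℝ g (x + t • (x' - x)) (x' - x)| ≤
      a * r + b * r * g (x + t • (x' - x)) := fun t =>
    calc |fderiv ℝ g (x + t • (x' - x)) (x' - x)|
        ≤ ‖fderiv ℝ g (x + t • (x' - x))‖ * r := (fderiv ℝ g _).le_opNorm _
      _ ≤ (a + b * g (x + t • (x' - x))) * r := by gcongr; exact hbound _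
      _ = a * r + b * r * g (x + t • (x' - x)) := by ring
  have := abs_sub_le_mul_exp_of_abs_deriv_le (by positivity) hφ hφbound
  simp only [one_smul, add_sub_cancel, zero_smul, add_zero] at this
  linarith

theorem norm_fderiv_rpow_le {u : E → ℝ} {y : E} {q c L : ℝ} (hq : 0 < q)
    (hu : DifferentiableAt ℝ u y) (hpos : 0 < u y)
    (hbound : ‖fderiv ℝ u y‖ ≤ c * u y ^ (1 - q) + L * u y) :
    ‖fderiv ℝ (fun z => u z ^ q) y‖ ≤ q * c + q * L * u y ^ q := by
  rw [(hu.hasFDerivAt.rpow_const (Or.inl hpos.ne')).fderiv, norm_smul, norm_eq_abs,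
    abs_of_pos (by positivity)]
  have h₁ : u y ^ (q - 1) * u y ^ (1 - q) = 1 := by
    rw [← rpow_add hpos, sub_add_sub_cancel', sub_self, rpow_zero]
  have h₂ : u y ^ (q - 1) * u y = u y ^ q := by
    rw [← rpow_add_one hpos.ne', sub_add_cancel]
  calc q * u y ^ (q - 1) * ‖fderiv ℝ u y‖
      ≤ q * u y ^ (q - 1) * (c * u y ^ (1 - q) + L * u y) := by gcongr
    _ = q * c * (u y ^ (q - 1) * u y ^ (1 - q)) + q * L * (u y ^ (q - 1) * u y) := by ring
    _ = q * c + q * L * u y ^ q := by rw [h₁, h₂, mul_one]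

theorem abs_rpow_sub_rpow_le_of_pos {u : E → ℝ} {q c L : ℝ} (hq : 0 < q) (hL : 0 ≤ L)
    (hu : Differentiable ℝ u) (hpos : ∀ y, 0 < u y)
    (hbound : ∀ y, ‖fderiv ℝ u y‖ ≤ c * u y ^ (1 - q) + L * u y) (x x' : E) :
    |u x' ^ q - u x ^ q| ≤ q * (c + L * u x ^ q) * ‖x' - x‖ * exp (q * L * ‖x' - x‖) := by
  have := abs_sub_le_of_norm_fderiv_le (by positivity)
    (hu.rpow_const fun y => Or.inl (hpos y).ne')
    (fun y => norm_fderiv_rpow_le hq (hu y) (hpos y) (hbound y)) x x'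
  convert this using 3
  ring

theorem abs_rpow_sub_rpow_le {u : E → ℝ} {q c L : ℝ} (hq₀ : 0 < q) (hq₁ : q ≤ 1) (hc : 0 ≤ c)
    (hL : 0 ≤ L) (hu : Differentiable ℝ u) (hnonneg : ∀ y, 0 ≤ u y)
    (hbound : ∀ y, ‖fderiv ℝ u y‖ ≤ c * u y ^ (1 - q) + L * u y) (x x' : E) :
    |u x' ^ q - u x ^ q| ≤ q * (c + L * u x ^ q) * ‖x' - x‖ * exp (q * L * ‖x' - x‖) := by
  -- `u ^ q` need not be differentiable where `u` vanishes: shift `u` by `ε > 0`, then let `ε → 0`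
  have hshift : ∀ ε > 0, |(ε + u x') ^ q - (ε + u x) ^ q| ≤
      q * (c + L * (ε + u x) ^ q) * ‖x' - x‖ * exp (q * L * ‖x' - x‖) := fun ε hε =>
    abs_rpow_sub_rpow_le_of_pos (u := fun y => ε + u y) hq₀ hL (hu.const_add ε)
      (fun y => add_pos_of_pos_of_nonneg hε (hnonneg y))
      (fun y => by
        -- the bound is monotone in the value of `u` because `1 - q ≥ 0`
        rw [fderiv_const_add]
        refine (hbound y).trans ?_
        have := hnonneg y
        gcongr <;> linarith) x x'
  have hq : 0 ≤ q := hq₀.le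
  have hlhs : Continuous fun ε : ℝ => |(ε + u x') ^ q - (ε + u x) ^ q| := by fun_prop
  have hrhs : Continuous fun ε : ℝ =>
      q * (c + L * (ε + u x) ^ q) * ‖x' - x‖ * exp (q * L * ‖x' - x‖) := by fun_prop
  simpa using le_of_tendsto_of_tendsto ((hlhs.tendsto 0).mono_left nhdsWithin_le_nhds)
    ((hrhs.tendsto 0).mono_left nhdsWithin_le_nhds)
    (eventually_nhdsWithin_of_forall (s := Set.Ioi 0) hshift)

end

theorem le_rpow_mul_rpow_add_mul_of_eq_min {ν σ L₀ L₁ β : ℝ} (hν : 0 ≤ ν) (hσ : 0 ≤ σ)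
    (hL₀ : 0 < L₀) (hL₁ : 0 < L₁) (hνσ : ν = 0 → σ = 0)
    (hβ : β = min ((σ ^ (1 + ν) / L₀) ^ (1 / ν)) (σ / L₁)) :
    σ ≤ L₀ ^ (1 / (1 + ν)) * β ^ (ν / (1 + ν)) + L₁ * β := by
  rcases min_choice ((σ ^ (1 + ν) / L₀) ^ (1 / ν)) (σ / L₁) with h | h <;>
    rw [h] at hβ <;> subst hβ
  · rcases hν.eq_or_lt with rfl | hν
    · rw [hνσ rfl]; positivity
    · have hp : 1 + ν ≠ 0 := by positivity
      have : L₀ ^ (1 / (1 + ν)) * ((σ ^ (1 + ν) / L₀) ^ (1 / ν)) ^ (ν / (1 + ν)) = σ := by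
        rw [← rpow_mul (by positivity), show 1 / ν * (ν / (1 + ν)) = 1 / (1 + ν) by field_simp,
          ← mul_rpow hL₀.le (by positivity), mul_div_cancel₀ _ hL₀.ne', one_div,
          rpow_rpow_inv hσ hp]
      have : 0 ≤ L₁ * (σ ^ (1 + ν) / L₀) ^ (1 / ν) := by positivity
      linarith
  · have : 0 ≤ L₀ ^ (1 / (1 + ν)) * (σ / L₁) ^ (ν / (1 + ν)) := by positivity
    rw [mul_div_cancel₀ σ hL₁.ne']
    linarith

theorem le_two_mul_rpow_add_mul {g σ L₀ L₁ ν β F : ℝ} (hν : 0 ≤ ν) (hσ : 0 ≤ σ) (hL₀ : 0 ≤ L₀)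
    (hβ : 0 ≤ β) (hF : 0 ≤ F)
    (hσβ : σ ≤ L₀ ^ (1 / (1 + ν)) * β ^ (ν / (1 + ν)) + L₁ * β)
    (hg : g ≤ √(σ ^ 2 + L₀ ^ (2 / (1 + ν)) * F ^ (2 * ν / (1 + ν))) + L₁ * F) :
    g ≤ 2 * L₀ ^ (1 / (1 + ν)) * (β + F) ^ (ν / (1 + ν)) + L₁ * (β + F) := by
  set c := L₀ ^ (1 / (1 + ν))
  set κ := ν / (1 + ν)
  have hsq : L₀ ^ (2 / (1 + ν)) * F ^ (2 * ν / (1 + ν)) = (c * F ^ κ) ^ 2 := by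
    rw [mul_pow, ← rpow_mul_natCast hL₀, ← rpow_mul_natCast hF]
    congr 2 <;> push_cast <;> ring
  have hsqrt : √(σ ^ 2 + (c * F ^ κ) ^ 2) ≤ σ + c * F ^ κ := by
    rw [sqrt_le_left (by positivity)]
    nlinarith [mul_nonneg hσ (by positivity : 0 ≤ c * F ^ κ)]
  have hβκ : c * β ^ κ ≤ c * (β + F) ^ κ := by gcongr; linarith
  have hFκ : c * F ^ κ ≤ c * (β + F) ^ κ := by gcongr; linarith
  rw [hsq] at hg
  linarith

theorem Real.rpow_add_le_mul_rpow_add_rpow {a b p : ℝ} (ha : 0 ≤ a) (hb : 0 ≤ b) (hp : 1 ≤ p) :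
    (a + b) ^ p ≤ 2 ^ (p - 1) * (a ^ p + b ^ p) := by
  lift a to NNReal using ha
  lift b to NNReal using hb
  exact_mod_cast NNReal.rpow_add_le_mul_rpow_add_rpow a b hp

theorem one_div_mul_mul_exp_rpow_le {ν L₀ L₁ η r : ℝ} (hν : ν ∈ Set.Icc (0 : ℝ) 1) (hL₀ : 0 ≤ L₀)
    (hL₁ : 0 ≤ L₁) (hη : 0 ≤ η) (hr : 0 ≤ r) :
    (1 / (1 + ν) * (2 * L₀ ^ (1 / (1 + ν)) + L₁ * η) * r * exp (1 / (1 + ν) * L₁ * r)) ^ (1 + ν)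
      ≤ 8 * (L₀ + (L₁ * η) ^ (1 + ν)) * exp (L₁ * r) * r ^ (1 + ν) := by
  obtain ⟨hν₀, hν₁⟩ := hν
  set p := 1 + ν
  have hp : 1 ≤ p := by linarith
  have hq : (1 / p) ^ p ≤ 1 := rpow_le_one (by positivity) (div_le_one_of_le₀ hp (by positivity))
    (by positivity)
  have hexp : exp (1 / p * L₁ * r) ^ p = exp (L₁ * r) := by
    rw [← exp_mul]; congr 1; field_simp
  have hL₀p : (2 * L₀ ^ (1 / p)) ^ p = 2 ^ p * L₀ := by
    rw [mul_rpow (by norm_num) (by positivity), one_div, rpow_inv_rpow hL₀ (by positivity)]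
  have h2p : (2 : ℝ) ^ p ≤ 4 := by
    calc (2 : ℝ) ^ p ≤ 2 ^ (2 : ℝ) := rpow_le_rpow_of_exponent_le one_le_two (by linarith)
      _ = 4 := by norm_num
  have h2p' : (2 : ℝ) ^ (p - 1) ≤ 2 := by
    calc (2 : ℝ) ^ (p - 1) ≤ 2 ^ (1 : ℝ) := rpow_le_rpow_of_exponent_le one_le_two (by linarith)
      _ = 2 := rpow_one 2
  have hsum : (2 * L₀ ^ (1 / p) + L₁ * η) ^ p ≤ 8 * (L₀ + (L₁ * η) ^ p) := by
    refine (rpow_add_le_mul_rpow_add_rpow (by positivity) (by positivity) hp).trans ?_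
    have : 0 ≤ (L₁ * η) ^ p := by positivity
    calc (2 : ℝ) ^ (p - 1) * ((2 * L₀ ^ (1 / p)) ^ p + (L₁ * η) ^ p)
        ≤ 2 * (4 * L₀ + (L₁ * η) ^ p) := by rw [hL₀p]; gcongr
      _ ≤ 8 * (L₀ + (L₁ * η) ^ p) := by linarith
  rw [mul_rpow (by positivity) (by positivity), mul_rpow (by positivity) hr,
    mul_rpow (by positivity) (by positivity), hexp]
  have : 0 ≤ (2 * L₀ ^ (1 / p) + L₁ * η) ^ p := by positivity
  have : 0 ≤ r ^ p * exp (L₁ * r) := by positivity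
  calc (1 / p) ^ p * (2 * L₀ ^ (1 / p) + L₁ * η) ^ p * r ^ p * exp (L₁ * r)
      ≤ 1 * (8 * (L₀ + (L₁ * η) ^ p)) * r ^ p * exp (L₁ * r) := by gcongr
    _ = 8 * (L₀ + (L₁ * η) ^ p) * exp (L₁ * r) * r ^ p := by ring

theorem holder_smooth_h_generalized_lipschitz :
    ∃ C : ℝ, 0 < C ∧
      ∀ (d : ℕ) (f : EuclideanSpace ℝ (Fin d) → ℝ)
        (xstar : EuclideanSpace ℝ (Fin d)) (ν σ L₀ L₁ β : ℝ)
        (h : EuclideanSpace ℝ (Fin d) → ℝ),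
        Differentiable ℝ f → (∀ y, f xstar ≤ f y) →
        ν ∈ Set.Icc (0 : ℝ) 1 → 0 ≤ σ → 0 < L₀ → 0 < L₁ → (ν = 0 → σ = 0) →
        (∀ x, ‖gradient f x‖ ≤
          Real.sqrt (σ ^ 2 + L₀ ^ (2 / (1 + ν)) * (f x - f xstar) ^ (2 * ν / (1 + ν))) +
            L₁ * (f x - f xstar)) →
        β = min ((σ ^ (1 + ν) / L₀) ^ (1 / ν)) (σ / L₁) →
        (∀ x, h x = (β + f x - f xstar) ^ (1 / (1 + ν))) →
        ∀ x x', |h x' - h x| ^ (1 + ν) ≤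
          C * (L₀ + (L₁ * h x) ^ (1 + ν)) * Real.exp (L₁ * ‖x' - x‖) *
            ‖x' - x‖ ^ (1 + ν) := by
  refine ⟨8, by norm_num, ?_⟩
  intro d f xstar ν σ L₀ L₁ β h hf hmin hν hσ hL₀ hL₁ hνσ hgrad hβ hh x x'
  have hp : 0 < 1 + ν := by linarith [hν.1]
  have hβ₀ : 0 ≤ β := hβ ▸ le_min (by positivity) (by positivity)
  have hσβ := le_rpow_mul_rpow_add_mul_of_eq_min hν.1 hσ hL₀ hL₁ hνσ hβ
  have hu₀ : ∀ y, 0 ≤ β + f y - f xstar := fun y => by linarith [hmin y]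
  have hu : ∀ y, ‖fderiv ℝ (fun z => β + f z - f xstar) y‖ ≤
      2 * L₀ ^ (1 / (1 + ν)) * (β + f y - f xstar) ^ (1 - 1 / (1 + ν)) +
        L₁ * (β + f y - f xstar) := fun y => by
    have hexponent : 1 - 1 / (1 + ν) = ν / (1 + ν) := by field_simp; ring
    rw [fderiv_sub_const, fderiv_const_add, ← toDual_gradient, LinearIsometryEquiv.norm_map,
      hexponent, add_sub_assoc]
    exact le_two_mul_rpow_add_mul hν.1 hσ hL₀.le hβ₀ (sub_nonneg.2 (hmin y)) hσβ (hgrad y)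
  have hlip := abs_rpow_sub_rpow_le (one_div_pos.2 hp) (div_le_one_of_le₀ (by linarith [hν.1])
    hp.le) (by positivity) hL₁.le (by fun_prop) hu₀ hu x x'
  rw [← hh, ← hh] at hlip
  calc |h x' - h x| ^ (1 + ν)
      ≤ (1 / (1 + ν) * (2 * L₀ ^ (1 / (1 + ν)) + L₁ * h x) * ‖x' - x‖ *
          exp (1 / (1 + ν) * L₁ * ‖x' - x‖)) ^ (1 + ν) :=
        rpow_le_rpow (abs_nonneg _) hlip hp.le
    _ ≤ _ := one_div_mul_mul_exp_rpow_le hν hL₀.le hL₁.le (hh x ▸ rpow_nonneg (hu₀ x) _) (norm_nonneg _)
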